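/- arXiv:2311.12218 — 8 statements merged into one kernel-verified Lean document; each statement's English description precedes it below -/
import Mathlib

section
/- Let D = (Σ, Const) be a precedence-and-response-only declarative process. If τ is a trace of D, then im(τ), the set of terms of τ, is a down-set of the preordered set (Σ, ≲occ), where ≲occ is the implied-occurrence relation of D. -/
/-- The implied-occurrence relation `≲occ` of a precedence-and-response-only
declarative process: the reflexive-transitive closure of
`{(a,b) : Prec(a,b) ∈ Const or Resp(b,a) ∈ Const}`. -/
def occRel {α : Type*} (Prec Resp : α → α → Prop) : α → α → Prop :=
  Relation.ReflTransGen (fun a b => Prec a b ∨ Resp b a)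

/-- `I` is a down-set of the (pre)ordered set `(Σ, r)`. -/
def IsDownSet {α : Type*} (r : α → α → Prop) (I : Set α) : Prop :=
  ∀ a b, r a b → b ∈ I → a ∈ I

/-- A (first-passage) trace: a duplicate-free list such that every precedence
and response constraint is satisfied ( `[a, b].Sublist τ` says that both `a`
and `b` occur in `τ` and `a` occurs before `b`). -/
def IsTrace {α : Type*} (Prec Resp : α → α → Prop) (τ : List α) : Prop :=
  τ.Nodup ∧
  (∀ a b, Prec a b → b ∈ τ → [a, b].Sublist τ) ∧
  (∀ a b, Resp a b → a ∈ τ → [a, b].Sublist τ)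

/-- The image (set of terms) of the sequence `τ`. -/
def imList {α : Type*} (τ : List α) : Set α := {x | x ∈ τ}

/-- If `τ` is a trace of a precedence-and-response-only declarative
process `D`, then `im(τ)` is a down-set of `(Σ, ≲occ)`. -/
theorem trace_image_isDownSet {α : Type*} [Fintype α] (Prec Resp : α → α → Prop)
    (hP : ∀ a b, Prec a b → a ≠ b) (hR : ∀ a b, Resp a b → a ≠ b)
    (τ : List α) (hτ : IsTrace Prec Resp τ) :
    IsDownSet (occRel Prec Resp) (imList τ) := by
  obtain ⟨-, hPrec, hResp⟩ := hτ
  intro a b hab hb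
  induction hab with
  | refl => exact hb
  | tail _ h ih =>
    rename_i c d _
    have hd : d ∈ τ := hb
    rcases h with h | h
    · exact ih (((hPrec c d h hd).subset) (by simp))
    · exact ih (((hResp d c h hd).subset) (by simp))
end

section
/- Let D = (Σ, Const) be a precedence-and-response-only declarative process, let τ be a trace of D, and let I = im(τ). If a₀, a_m ∈ I satisfy a₀ ⪯_I a_m and a₀ ≠ a_m, then a₀ appears before a_m in τ. -/
section Helpers
variable {α : Type*} [DecidableEq α]

lemma sublist_of_indexOf_lt {a b : α} : ∀ {τ : List α}, a ∈ τ → b ∈ τ →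
    τ.idxOf a < τ.idxOf b → [a, b].Sublist τ
  | c :: t, ha, hb, hlt => by
    by_cases hac : a = c
    · subst hac
      have hba : b ≠ a := by rintro rfl; simp at hlt
      have hbt : b ∈ t := by
        rcases List.mem_cons.mp hb with h | h
        · exact absurd h hba
        · exact h
      exact (List.singleton_sublist.mpr hbt).cons₂ a
    · have hbc : b ≠ c := by
        rintro rfl
        simp only [List.idxOf_cons_self, List.idxOf_cons_ne _ (Ne.symm hac)] at hlt
        omega
      have hat : a ∈ t := (List.mem_cons.mp ha).resolve_left hac
      have hbt : b ∈ t := (List.mem_cons.mp hb).resolve_left hbc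
      have hlt' : t.idxOf a < t.idxOf b := by
        simp only [List.idxOf_cons_ne _ (Ne.symm hac), List.idxOf_cons_ne _ (Ne.symm hbc)] at hlt
        omega
      exact (sublist_of_indexOf_lt hat hbt hlt').cons c

lemma indexOf_lt_of_sublist {a b : α} {τ : List α} (hn : τ.Nodup)
    (hs : [a, b].Sublist τ) : τ.idxOf a < τ.idxOf b := by
  induction τ with
  | nil => simp at hs
  | cons c t ih =>
    rcases hs with _ | _ <;> rename_i hs
    · -- [a,b] sublist t
      have hat : a ∈ t := hs.subset (by simp)
      have hbt : b ∈ t := hs.subset (by simp)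
      have hct : c ∉ t := (List.nodup_cons.mp hn).1
      have hac : a ≠ c := fun h => hct (h ▸ hat)
      have hbc : b ≠ c := fun h => hct (h ▸ hbt)
      have := ih (List.nodup_cons.mp hn).2 hs
      simp only [List.idxOf_cons_ne _ (Ne.symm hac), List.idxOf_cons_ne _ (Ne.symm hbc)]
      omega
    · -- a = c, [b] sublist t
      have hbt : b ∈ t := List.singleton_sublist.mp hs
      have hct : a ∉ t := (List.nodup_cons.mp hn).1
      have hba : b ≠ a := fun h => hct (h ▸ hbt)
      simp [List.idxOf_cons_self, List.idxOf_cons_ne _ (Ne.symm hba), hbt]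

end Helpers


/-- The order-preserving relation `→ord` of a precedence-and-response-only
declarative process: `{(a,b) : Prec(a,b) ∈ Const or Resp(a,b) ∈ Const}`. -/
def ordRel {α : Type*} (Prec Resp : α → α → Prop) : α → α → Prop :=
  fun a b => Prec a b ∨ Resp a b

/-- The restriction `r|_I := r ∩ (I × I)` of a relation to a set. -/
def restrictRel {α : Type*} (r : α → α → Prop) (I : Set α) : α → α → Prop :=
  fun a b => a ∈ I ∧ b ∈ I ∧ r a b

/-- The relation `⪯_I`: the reflexive-transitive closure of the restriction of
`→ord` to `I`. -/
def preRel {α : Type*} (Prec Resp : α → α → Prop) (I : Set α) : α → α → Prop :=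
  Relation.ReflTransGen (restrictRel (ordRel Prec Resp) I)

/-- if `τ` is a trace with image `I` and `a₀ ⪯_I aₘ` with
`a₀ ≠ aₘ`, then `a₀` appears before `aₘ` in `τ`. -/
theorem preRel_appears_before {α : Type*} [Fintype α] (Prec Resp : α → α → Prop)
    (hP : ∀ a b, Prec a b → a ≠ b) (hR : ∀ a b, Resp a b → a ≠ b)
    (τ : List α) (hτ : IsTrace Prec Resp τ)
    (a₀ aₘ : α) (h₀ : a₀ ∈ imList τ) (hₘ : aₘ ∈ imList τ)
    (hle : preRel Prec Resp (imList τ) a₀ aₘ) (hne : a₀ ≠ aₘ) :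
    [a₀, aₘ].Sublist τ := by
  classical
  obtain ⟨hnd, hPrec, hResp⟩ := hτ
  have step : ∀ x y, restrictRel (ordRel Prec Resp) (imList τ) x y →
      [x, y].Sublist τ := by
    rintro x y ⟨hx, hy, hxy | hxy⟩
    · exact hPrec x y hxy hy
    · exact hResp x y hxy hx
  have mono : ∀ x y, preRel Prec Resp (imList τ) x y →
      τ.idxOf x ≤ τ.idxOf y := by
    intro x y h
    induction h with
    | refl => exact le_rfl
    | tail _ hst ih => exact le_of_lt (lt_of_le_of_lt ih (indexOf_lt_of_sublist hnd (step _ _ hst)))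
  rcases (Relation.ReflTransGen.cases_head hle) with rfl | ⟨c, hst, htail⟩
  · exact absurd rfl hne
  · have h1 : τ.idxOf a₀ < τ.idxOf c := indexOf_lt_of_sublist hnd (step _ _ hst)
    have h2 : τ.idxOf c ≤ τ.idxOf aₘ := mono _ _ htail
    exact sublist_of_indexOf_lt h₀ hₘ (lt_of_lt_of_le h1 h2)
end

section
/- Let D = (Σ, Const) be a precedence-and-response-only declarative process. Then PossIm(D) is exactly the set of all down-sets I of (Σ, ≲occ) for which the relation ⪯_I is antisymmetric. That is, a subset I ⊆ Σ is the image of some trace of D if and only if I is a down-set of (Σ, ≲occ) and ⪯_I is antisymmetric. -/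
namespace List

variable {α : Type*}

theorem idxOf_lt_idxOf_of_pair_sublist [DecidableEq α] {l : List α} {a b : α} (hl : l.Nodup)
    (h : [a, b] <+ l) : l.idxOf a < l.idxOf b := by
  obtain ⟨l₁, l₂, rfl, ha, hb⟩ := cons_sublist_iff.mp h
  have hb₁ : b ∉ l₁ := fun hb₁ => disjoint_of_nodup_append hl hb₁ (singleton_sublist.mp hb)
  rw [idxOf_append, idxOf_append, if_pos ha, if_neg hb₁]
  exact (idxOf_lt_length_of_mem ha).trans_le (Nat.le_add_left _ _)

theorem Pairwise.pair_sublist {r : α → α → Prop} [Std.Antisymm r] {l : List α}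
    (hl : l.Pairwise r) {a b : α} (ha : a ∈ l) (hb : b ∈ l) (hab : r a b) (hne : a ≠ b) :
    [a, b] <+ l := by
  induction l with
  | nil => cases ha
  | cons x t ih =>
    rcases mem_cons.mp ha with rfl | ha'
    · exact (singleton_sublist.mpr ((mem_cons.mp hb).resolve_left hne.symm)).cons_cons a
    rcases mem_cons.mp hb with rfl | hb'
    · exact absurd (antisymm hab (rel_of_pairwise_cons hl ha')) hne
    · exact (ih hl.of_cons ha' hb').cons x

end List

theorem Set.Finite.exists_list_pair_sublist_of_isPartialOrder {α : Type*} {I : Set α}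
    (hI : I.Finite) (r : α → α → Prop) [IsPartialOrder α r] :
    ∃ l : List α, l.Nodup ∧ imList l = I ∧
      ∀ a ∈ l, ∀ b ∈ l, r a b → a ≠ b → [a, b].Sublist l := by
  classical
  obtain ⟨s, hs, hrs⟩ := extend_partialOrder r
  let l := hI.toFinset.sort s
  refine ⟨l, Finset.sort_nodup _ _, Set.ext fun x => ?_, fun a ha b hb hab =>
    (Finset.pairwise_sort _ _).pair_sublist ha hb (hrs a b hab)⟩
  simp [imList, l]

theorem IsDownSet.reflTransGen {α : Type*} {r : α → α → Prop} {I : Set α}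
    (h : IsDownSet r I) : IsDownSet (Relation.ReflTransGen r) I := by
  intro a b hab
  induction hab with
  | refl => exact id
  | tail _ hcb ih => exact fun hb => ih (h _ _ hcb hb)

namespace IsTrace

variable {α : Type*} {Prec Resp : α → α → Prop} {τ : List α}

theorem isDownSet_occRel (hτ : IsTrace Prec Resp τ) :
    IsDownSet (occRel Prec Resp) (imList τ) := by
  refine IsDownSet.reflTransGen fun a b hab hb => ?_
  rcases hab with hab | hba
  · exact (hτ.2.1 a b hab hb).subset (by simp)
  · exact (hτ.2.2 b a hba hb).subset (by simp)

theorem idxOf_le_of_preRel [DecidableEq α] (hτ : IsTrace Prec Resp τ) {a b : α}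
    (h : preRel Prec Resp (imList τ) a b) : τ.idxOf a ≤ τ.idxOf b := by
  induction h with
  | refl => exact le_rfl
  | tail _ hcb ih =>
    obtain ⟨hc, hb, hcb | hcb⟩ := hcb
    · exact ih.trans (List.idxOf_lt_idxOf_of_pair_sublist hτ.1 (hτ.2.1 _ _ hcb hb)).le
    · exact ih.trans (List.idxOf_lt_idxOf_of_pair_sublist hτ.1 (hτ.2.2 _ _ hcb hc)).le

theorem preRel_antisymm (hτ : IsTrace Prec Resp τ) {a b : α}
    (hab : preRel Prec Resp (imList τ) a b) (hba : preRel Prec Resp (imList τ) b a) :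
    a = b := by
  classical
  rcases hab.cases_head with rfl | ⟨_, ⟨ha, -⟩, -⟩
  · rfl
  exact (List.idxOf_inj ha).mp
    ((hτ.idxOf_le_of_preRel hab).antisymm (hτ.idxOf_le_of_preRel hba))

end IsTrace

theorem exists_isTrace_imList_eq {α : Type*} {Prec Resp : α → α → Prop}
    (hP : ∀ a b, Prec a b → a ≠ b) (hR : ∀ a b, Resp a b → a ≠ b) {I : Set α} (hI : I.Finite)
    (hdown : IsDownSet (occRel Prec Resp) I)
    (hanti : ∀ a b, preRel Prec Resp I a b → preRel Prec Resp I b a → a = b) :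
    ∃ τ : List α, IsTrace Prec Resp τ ∧ imList τ = I := by
  have : IsPartialOrder α (preRel Prec Resp I) :=
    { refl := fun _ => .refl, trans := fun _ _ _ => .trans, antisymm := hanti }
  obtain ⟨τ, hnd, rfl, hsub⟩ := hI.exists_list_pair_sublist_of_isPartialOrder (preRel Prec Resp I)
  refine ⟨τ, ⟨hnd, fun a b hab hb => ?_, fun a b hab ha => ?_⟩, rfl⟩
  · have ha : a ∈ τ := hdown a b (Relation.ReflTransGen.single (.inl hab)) hb
    exact hsub a ha b hb (Relation.ReflTransGen.single ⟨ha, hb, .inl hab⟩) (hP a b hab)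
  · have hb : b ∈ τ := hdown b a (Relation.ReflTransGen.single (.inr hab)) ha
    exact hsub a ha b hb (Relation.ReflTransGen.single ⟨ha, hb, .inr hab⟩) (hR a b hab)

/-- a set `I ⊆ Σ` is the image of some trace of `D` if and only if
`I` is a down-set of `(Σ, ≲occ)` and `⪯_I` is antisymmetric. -/
theorem possIm_characterization {α : Type*} [Fintype α] (Prec Resp : α → α → Prop)
    (hP : ∀ a b, Prec a b → a ≠ b) (hR : ∀ a b, Resp a b → a ≠ b)
    (I : Set α) :
    (∃ τ : List α, IsTrace Prec Resp τ ∧ imList τ = I) ↔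
      (IsDownSet (occRel Prec Resp) I ∧
        ∀ a b, preRel Prec Resp I a b → preRel Prec Resp I b a → a = b) := by
  constructor
  · rintro ⟨τ, hτ, rfl⟩
    exact ⟨hτ.isDownSet_occRel, fun a b => hτ.preRel_antisymm⟩
  · rintro ⟨hdown, hanti⟩
    exact exists_isTrace_imList_eq hP hR I.toFinite hdown hanti
end

section
/- Let D = (Σ, Const) be a precedence-and-response-only declarative process. Then Traces(D) = ⋃_{I ∈ PossIm(D)} L((I, ⪯_I)), where PossIm(D) is the set of all down-sets I of (Σ, ≲occ) such that ⪯_I is antisymmetric. In other words, a sequence τ is a trace of D if and only if there is a down-set I of (Σ, ≲occ) with ⪯_I antisymmetric such that τ is a linear extension of the poset (I, ⪯_I). -/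
/-- `τ` is a linear extension of the poset `(I, r)`. -/
def IsLinExt {α : Type*} (r : α → α → Prop) (I : Set α) (τ : List α) : Prop :=
  τ.Nodup ∧ (∀ x, x ∈ τ ↔ x ∈ I) ∧ ∀ a b, r a b → a ≠ b → [a, b].Sublist τ

/-- Transitivity of the "pair sublist" relation on a nodup list. -/
lemma pair_sublist_trans {α : Type*} : ∀ {τ : List α}, τ.Nodup →
    ∀ {a b c : α}, [a, b].Sublist τ → [b, c].Sublist τ → [a, c].Sublist τ := by
  intro τ
  induction τ with
  | nil => intro _ a b c h; simp at h
  | cons x t ih =>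
    intro hnd a b c h1 h2
    have hx : x ∉ t := (List.nodup_cons.mp hnd).1
    have hndt : t.Nodup := (List.nodup_cons.mp hnd).2
    rcases List.sublist_cons_iff.mp h1 with h1' | ⟨r1, he1, hr1⟩
    · rcases List.sublist_cons_iff.mp h2 with h2' | ⟨r2, he2, hr2⟩
      · exact (ih hndt h1' h2').cons x
      · -- x = b, but b ∈ t from h1'
        have hb : b ∈ t := h1'.subset (by simp)
        have : b = x := by injection he2
        exact absurd hb (this ▸ hx)
    · -- x = a, r1 = [b], [b] <+ t
      have hxa : a = x := by injection he1
      have hr1e : r1 = [b] := by injection he1 with _ h; exact h.symm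
      subst hxa; subst hr1e
      rcases List.sublist_cons_iff.mp h2 with h2' | ⟨r2, he2, hr2⟩
      · have hc : [c].Sublist t := (List.sublist_cons_self b [c]).trans h2'
        exact hc.cons₂ a
      · have hxb : b = a := by injection he2
        have hr2e : r2 = [c] := by injection he2 with _ h; exact h.symm
        subst hxb; subst hr2e
        exact hr2.cons₂ b

lemma pair_sublist_irrefl {α : Type*} {τ : List α} (hnd : τ.Nodup) {a : α}
    (h : [a, a].Sublist τ) : False := by
  have := h.nodup hnd
  simp at this

/-- `τ` is a trace of `D` if and only if `τ` is a linear extension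
of `(I, ⪯_I)` for some down-set `I` of `(Σ, ≲occ)` with `⪯_I` antisymmetric. -/
theorem traces_eq_union_linExts {α : Type*} [Fintype α] (Prec Resp : α → α → Prop)
    (hP : ∀ a b, Prec a b → a ≠ b) (hR : ∀ a b, Resp a b → a ≠ b)
    (τ : List α) :
    IsTrace Prec Resp τ ↔
      ∃ I : Set α, IsDownSet (occRel Prec Resp) I ∧
        (∀ a b, preRel Prec Resp I a b → preRel Prec Resp I b a → a = b) ∧
        IsLinExt (preRel Prec Resp I) I τ := by
  constructor
  · rintro ⟨hnd, hPt, hRt⟩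
    refine ⟨{x | x ∈ τ}, ?_, ?_, ?_⟩
    · -- down-set
      have hstep : ∀ a b : α, (Prec a b ∨ Resp b a) → b ∈ τ → a ∈ τ := by
        rintro a b (h | h) hb
        · have := (hPt a b h hb).subset (show a ∈ [a, b] by simp)
          exact this
        · have := (hRt b a h hb).subset (show a ∈ [b, a] by simp)
          exact this
      intro a b hab hb
      induction hab with
      | refl => exact hb
      | tail _ h ih => exact ih (hstep _ _ h hb)
    all_goals {
      -- strictness of preRel
      have hstrict : ∀ a b : α, preRel Prec Resp {x | x ∈ τ} a b →
          a = b ∨ [a, b].Sublist τ := by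
        intro a b hab
        induction hab with
        | refl => exact Or.inl rfl
        | tail _ h ih =>
          rename_i b c _
          obtain ⟨hbI, hcI, hord⟩ := h
          have hbc : [b, c].Sublist τ := by
            rcases hord with h' | h'
            · exact hPt _ _ h' hcI
            · exact hRt _ _ h' hbI
          rcases ih with rfl | hab'
          · exact Or.inr hbc
          · exact Or.inr (pair_sublist_trans hnd hab' hbc)
      first
      | -- antisymmetry
        (intro a b hab hba
         rcases hstrict a b hab with rfl | h1
         · rfl
         · rcases hstrict b a hba with rfl | h2
           · rfl
           · exact absurd (pair_sublist_trans hnd h1 h2) (fun h => pair_sublist_irrefl hnd h))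
      | -- linear extension
        (refine ⟨hnd, fun x => Iff.rfl, fun a b hab hne => ?_⟩
         rcases hstrict a b hab with rfl | h
         · exact absurd rfl hne
         · exact h)
    }
  · rintro ⟨I, hDown, _, hnd, hmem, hlin⟩
    refine ⟨hnd, ?_, ?_⟩
    · intro a b hp hb
      have hbI : b ∈ I := (hmem b).mp hb
      have haI : a ∈ I := hDown a b (Relation.ReflTransGen.single (Or.inl hp)) hbI
      exact hlin a b (Relation.ReflTransGen.single ⟨haI, hbI, Or.inl hp⟩) (hP a b hp)
    · intro a b hr ha
      have haI : a ∈ I := (hmem a).mp ha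
      have hbI : b ∈ I := hDown b a (Relation.ReflTransGen.single (Or.inr hr)) haI
      exact hlin a b (Relation.ReflTransGen.single ⟨haI, hbI, Or.inr hr⟩) (hR a b hr)
end

section
/- Let D = (Σ, Const) be a precedence-only declarative process, define M := Σ \ { a ∈ Σ : there exist distinct b,c ∈ Σ with b ≲occ c, c ≲occ b, and b ≲occ a }, and let I ∈ PossIm(D). Then for all a,b ∈ I, a ⪯_I b if and only if a ≲occ b restricted to M holds; that is, (I, ⪯_I) is an induced subposet of (M, ≲occ|_M). -/
/-- A (first-passage) trace of a precedence-only declarative process. -/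
def IsTraceP {α : Type*} (Prec : α → α → Prop) (τ : List α) : Prop :=
  τ.Nodup ∧ ∀ a b, Prec a b → b ∈ τ → [a, b].Sublist τ

/-- The set `M := Σ \ { a : ∃ distinct b, c with b ≲occ c, c ≲occ b and b ≲occ a }`. -/
def Mset {α : Type*} (occ : α → α → Prop) : Set α :=
  {a | ¬ ∃ b c : α, b ≠ c ∧ occ b c ∧ occ c b ∧ occ b a}


/-!
A trace is closed under predecessors, so every `≲occ`-chain ending in the image of a trace
stays inside it; this gives the equivalence of `⪯_I` and `≲occ` on `I`. Moreover each
precedence step strictly increases the position in the trace, so `≲occ` is antisymmetric on the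
image, which therefore avoids every element lying above a nontrivial `≲occ`-cycle, i.e. `I ⊆ M`.
-/

open Relation

section DownClosed

variable {α : Type*} {Prec : α → α → Prop} {I : Set α}

theorem mem_of_reflTransGen_restrictRel {a b : α} (h : ReflTransGen (restrictRel Prec I) a b)
    (hb : b ∈ I) : a ∈ I := by
  rcases ReflTransGen.cases_head h with rfl | ⟨_, hac, _⟩
  exacts [hb, hac.1]

theorem reflTransGen_restrictRel_of_downClosed (hI : ∀ a b, Prec a b → b ∈ I → a ∈ I)
    {a b : α} (h : ReflTransGen Prec a b) (hb : b ∈ I) :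
    ReflTransGen (restrictRel Prec I) a b := by
  induction h using ReflTransGen.head_induction_on with
  | refl => exact .refl
  | head hac _ ih =>
    have hc := mem_of_reflTransGen_restrictRel ih hb
    exact .head ⟨hI _ _ hac hc, hc, hac⟩ ih

theorem mem_of_reflTransGen_of_downClosed (hI : ∀ a b, Prec a b → b ∈ I → a ∈ I)
    {a b : α} (h : ReflTransGen Prec a b) (hb : b ∈ I) : a ∈ I :=
  mem_of_reflTransGen_restrictRel (reflTransGen_restrictRel_of_downClosed hI h hb) hb

theorem reflTransGen_restrictRel_iff_of_downClosed (hI : ∀ a b, Prec a b → b ∈ I → a ∈ I)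
    {a b : α} (hb : b ∈ I) :
    ReflTransGen (restrictRel Prec I) a b ↔ ReflTransGen Prec a b :=
  ⟨ReflTransGen.mono (fun _ _ h => h.2.2) a b,
    (reflTransGen_restrictRel_of_downClosed hI · hb)⟩

end DownClosed

theorem List.idxOf_lt_idxOf_of_pair_sublist_s9 {α : Type*} [DecidableEq α] {a b : α} {l : List α}
    (hl : l.Nodup) (hab : [a, b].Sublist l) : l.idxOf a < l.idxOf b := by
  obtain ⟨l₁, l₂, rfl, ha, hb⟩ := List.cons_sublist_iff.1 hab
  have hb : b ∈ l₂ := List.singleton_sublist.1 hb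
  have hb' : b ∉ l₁ := fun h => (List.nodup_append.1 hl).2.2 _ h _ hb rfl
  rw [List.idxOf_append_of_mem ha, List.idxOf_append_of_notMem hb']
  exact (List.idxOf_lt_length_iff.2 ha).trans_le (Nat.le_add_right _ _)

namespace IsTraceP

variable {α : Type*} {Prec : α → α → Prop} {τ : List α}

theorem downClosed (hτ : IsTraceP Prec τ) :
    ∀ a b, Prec a b → b ∈ imList τ → a ∈ imList τ :=
  fun a b hab hb => (hτ.2 a b hab hb).subset List.mem_cons_self

theorem idxOf_le_of_reflTransGen [DecidableEq α] (hτ : IsTraceP Prec τ) {a b : α}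
    (h : ReflTransGen Prec a b) (hb : b ∈ τ) : τ.idxOf a ≤ τ.idxOf b := by
  induction h using ReflTransGen.head_induction_on with
  | refl => exact le_rfl
  | head hac hcb ih =>
    have hc : _ ∈ τ := mem_of_reflTransGen_of_downClosed hτ.downClosed hcb hb
    exact (List.idxOf_lt_idxOf_of_pair_sublist_s9 hτ.1 (hτ.2 _ _ hac hc)).le.trans ih

theorem eq_of_reflTransGen_of_reflTransGen (hτ : IsTraceP Prec τ) {a b : α}
    (hab : ReflTransGen Prec a b) (hba : ReflTransGen Prec b a) (hb : b ∈ τ) : a = b := by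
  classical
  have ha : a ∈ τ := mem_of_reflTransGen_of_downClosed hτ.downClosed hab hb
  exact (List.idxOf_inj ha).1 <|
    le_antisymm (hτ.idxOf_le_of_reflTransGen hab hb) (hτ.idxOf_le_of_reflTransGen hba ha)

theorem imList_subset_Mset (hτ : IsTraceP Prec τ) : imList τ ⊆ Mset (ReflTransGen Prec) := by
  rintro a ha ⟨b, c, hne, hbc, hcb, hba⟩
  have hb := mem_of_reflTransGen_of_downClosed hτ.downClosed hba ha
  exact hne (hτ.eq_of_reflTransGen_of_reflTransGen hbc hcb
    (mem_of_reflTransGen_of_downClosed hτ.downClosed hcb hb))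

end IsTraceP

theorem prec_only_induced_subposet_general {α : Type*}
    (Prec : α → α → Prop)
    (I : Set α) (hI : ∃ τ : List α, IsTraceP Prec τ ∧ imList τ = I) :
    I ⊆ Mset (Relation.ReflTransGen Prec) ∧
      ∀ a ∈ I, ∀ b ∈ I,
        (Relation.ReflTransGen (restrictRel Prec I) a b ↔
          Relation.ReflTransGen Prec a b) := by
  obtain ⟨τ, hτ, rfl⟩ := hI
  exact ⟨hτ.imList_subset_Mset,
    fun _ _ _ hb => reflTransGen_restrictRel_iff_of_downClosed hτ.downClosed hb⟩

/-- for a precedence-only declarative process and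
`I ∈ PossIm(D)`, the poset `(I, ⪯_I)` (where `⪯_I = (Prec|_I)^⊕`) is an
induced subposet of `(M, ≲occ|_M)`: we have `I ⊆ M`, and for all `a, b ∈ I`,
`a ⪯_I b` holds iff `a ≲occ b` (as elements of `M`). -/
theorem prec_only_induced_subposet {α : Type*} [Fintype α]
    (Prec : α → α → Prop) (hP : ∀ a b, Prec a b → a ≠ b)
    (I : Set α) (hI : ∃ τ : List α, IsTraceP Prec τ ∧ imList τ = I) :
    I ⊆ Mset (Relation.ReflTransGen Prec) ∧
      ∀ a ∈ I, ∀ b ∈ I,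
        (Relation.ReflTransGen (restrictRel Prec I) a b ↔
          Relation.ReflTransGen Prec a b) :=
  prec_only_induced_subposet_general Prec I hI
end

section
/- Let P = (P, ⪯_P) be a finite poset, let Q be an induced subposet of P, and let σ be a linear extension of Q, regarded as a total order ⪯_σ on the set Q. Then the reflexive-transitive closure of the union ⪯_P ∪ ⪯_σ is antisymmetric; that is, (P, (⪯_P ∪ ⪯_σ)^⊕) is a poset. -/
/-- let `P` be a finite poset, `Q ⊆ P` an induced subposet, and
`σ` a linear extension of `Q`, regarded as a total order `rσ` on the set `Q`
(in particular `rσ` extends the order of `Q`, which is the order of `P`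
restricted to `Q`).  Then the reflexive-transitive closure of `≤ ∪ rσ` is
antisymmetric, i.e. `(P, (⪯_P ∪ ⪯_σ)^⊕)` is a poset. -/
theorem posetPlusLinExt_antisymm {α : Type*} [Fintype α] [PartialOrder α]
    (Q : Set α) (rσ : α → α → Prop)
    (hdom : ∀ a b, rσ a b → a ∈ Q ∧ b ∈ Q)
    (hrefl : ∀ a ∈ Q, rσ a a)
    (htrans : ∀ a b c, rσ a b → rσ b c → rσ a c)
    (hantisymm : ∀ a b, rσ a b → rσ b a → a = b)
    (htotal : ∀ a ∈ Q, ∀ b ∈ Q, rσ a b ∨ rσ b a)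
    (hext : ∀ a ∈ Q, ∀ b ∈ Q, a ≤ b → rσ a b) :
    ∀ a b, Relation.ReflTransGen (fun x y => x ≤ y ∨ rσ x y) a b →
      Relation.ReflTransGen (fun x y => x ≤ y ∨ rσ x y) b a → a = b := by
  intro a b hab hba
  -- R is a transitive relation containing ≤ ∪ rσ and being reflexive
  set R : α → α → Prop := fun x y =>
    x ≤ y ∨ ∃ q q', q ∈ Q ∧ q' ∈ Q ∧ x ≤ q ∧ rσ q q' ∧ q' ≤ y with hRdef
  have hR : ∀ x y, Relation.ReflTransGen (fun x y => x ≤ y ∨ rσ x y) x y → R x y := by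
    intro x y h
    induction h with
    | refl => exact Or.inl le_rfl
    | tail h hstep ih =>
      rename_i c d
      rcases ih with hxc | ⟨q, q', hq, hq', hxq, hr, hq'c⟩
      · rcases hstep with hcd | hcd
        · exact Or.inl (hxc.trans hcd)
        · obtain ⟨hc, hd⟩ := hdom _ _ hcd
          exact Or.inr ⟨c, d, hc, hd, hxc, hcd, le_rfl⟩
      · rcases hstep with hcd | hcd
        · exact Or.inr ⟨q, q', hq, hq', hxq, hr, hq'c.trans hcd⟩
        · obtain ⟨hc, hd⟩ := hdom _ _ hcd
          have : rσ q' c := hext _ hq' _ hc hq'c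
          exact Or.inr ⟨q, d, hq, hd, hxq, htrans _ _ _ (htrans _ _ _ hr this) hcd, le_rfl⟩
  have h1 := hR _ _ hab
  have h2 := hR _ _ hba
  rcases h1 with h1 | ⟨q1, q1', hq1, hq1', haq1, hr1, hq1b⟩
  · rcases h2 with h2 | ⟨q, q', hq, hq', hbq, hr, hq'a⟩
    · exact le_antisymm h1 h2
    · have : rσ q' q := hext _ hq' _ hq ((hq'a.trans h1).trans hbq)
      have heq : q = q' := hantisymm _ _ hr this
      exact le_antisymm h1 ((hbq.trans heq.le).trans hq'a)
  · rcases h2 with h2 | ⟨q2, q2', hq2, hq2', hbq2, hr2, hq2a⟩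
    · have : rσ q1' q1 := hext _ hq1' _ hq1 ((hq1b.trans h2).trans haq1)
      have heq : q1 = q1' := hantisymm _ _ hr1 this
      exact le_antisymm ((haq1.trans heq.le).trans hq1b) h2
    · have s1 : rσ q1' q2 := hext _ hq1' _ hq2 (hq1b.trans hbq2)
      have s2 : rσ q2' q1 := hext _ hq2' _ hq1 (hq2a.trans haq1)
      have e1 : q1 = q2' := hantisymm _ _ (htrans _ _ _ (htrans _ _ _ hr1 s1) hr2) s2
      have e2 : q2 = q1' := hantisymm _ _ (htrans _ _ _ (htrans _ _ _ hr2 s2) hr1) s1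
      have ha : a = q1 := le_antisymm haq1 (e1.le.trans hq2a)
      have hb : b = q2 := le_antisymm hbq2 (e2.le.trans hq1b)
      have e3 : q1 = q2 := hantisymm _ _ (e2 ▸ hr1) (e1 ▸ hr2)
      rw [ha, hb, e3]
end

section
/- Let D = (Σ, Const) be a successor-only declarative process and define CoreOcc(D) := { K ∈ Σ/≲occ : ⪯_K is antisymmetric }. Then Traces(D) = ⋃_{S ⊆ CoreOcc(D)} L(( ⋃_{K ∈ S} K, ⋃_{K ∈ S} ⪯_K )); that is, a sequence τ is a trace of D if and only if there is a subset S of CoreOcc(D) such that τ is a linear extension of the poset whose underlying set is the disjoint union of the classes in S and whose order is the disjoint union of the relations ⪯_K for K ∈ S. -/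
/-!
Every successor constraint makes its two ends occur together, so a trace `τ` is a union of
`≲occ`-classes, and along each class the order of `τ` extends every `Succ` step, hence `⪯_K`.
A cycle of `⪯_K` would put some activity strictly before itself in `τ`, so these classes lie in
`CoreOcc`. Conversely, when `τ` linearly extends classes of `S`, the two ends of a constraint
`Succ a b` lie in one class, so they occur together, and `a ≠ b` forces `a` to come first.
-/

/-- The implied-occurrence relation `≲occ` of a successor-only process. -/
def occS {α : Type*} (Succ : α → α → Prop) : α → α → Prop :=
  Relation.ReflTransGen (fun a b => Succ a b ∨ Succ b a)

/-- `⪯_I` for the successor-only case (`→ord = Succ`). -/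
def preS {α : Type*} (Succ : α → α → Prop) (I : Set α) : α → α → Prop :=
  Relation.ReflTransGen (restrictRel Succ I)

/-- A (first-passage) trace of a successor-only declarative process. -/
def IsTraceS {α : Type*} (Succ : α → α → Prop) (τ : List α) : Prop :=
  τ.Nodup ∧ ∀ a b, Succ a b → ((a ∈ τ ↔ b ∈ τ) ∧ (a ∈ τ → [a, b].Sublist τ))

/-- `CoreOcc(D)`: the `≲occ`-equivalence classes `K` for which `⪯_K` is
antisymmetric. -/
def CoreOcc {α : Type*} (Succ : α → α → Prop) : Set (Set α) :=
  {K | (∃ a : α, K = {b | occS Succ a b}) ∧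
    ∀ x y, preS Succ K x y → preS Succ K y x → x = y}

theorem List.Nodup.pair_sublist_trans {α : Type*} {l : List α} (hl : l.Nodup) {a b c : α}
    (hab : [a, b].Sublist l) (hbc : [b, c].Sublist l) : [a, c].Sublist l := by
  induction l with
  | nil => simp at hab
  | cons x t ih =>
    rw [List.nodup_cons] at hl
    cases hab with
    | cons _ hab =>
      cases hbc with
      | cons _ hbc => exact (ih hl.2 hab hbc).cons x
      | cons_cons _ _ => exact absurd (hab.subset (by simp)) hl.1
    | cons_cons _ hb =>
      cases hbc with
      | cons _ hbc => exact ((List.sublist_cons_self b [c]).trans hbc).cons_cons a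
      | cons_cons _ hc => exact hc.cons_cons a

theorem List.Nodup.not_pair_sublist_self {α : Type*} {l : List α} (hl : l.Nodup) (a : α) :
    ¬ [a, a].Sublist l := fun h => by simpa using h.nodup hl

section SuccessorOnly

variable {α : Type*} {Succ : α → α → Prop}

theorem occS.imp_of_succ {P : α → Prop} (hP : ∀ a b, Succ a b → (P a ↔ P b)) {a b : α}
    (h : occS Succ a b) (ha : P a) : P b := by
  induction h with
  | refl => exact ha
  | tail _ hstep ih => exact hstep.elim (fun h => (hP _ _ h).1 ih) (fun h => (hP _ _ h).2 ih)

theorem mem_occClass_iff_of_succ (c : α) {a b : α} (h : Succ a b) :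
    a ∈ {x | occS Succ c x} ↔ b ∈ {x | occS Succ c x} :=
  ⟨fun ha => ha.tail (Or.inl h), fun hb => hb.tail (Or.inr h)⟩

namespace IsTraceS

variable {τ : List α}

theorem mem_of_occS (hτ : IsTraceS Succ τ) {a b : α} (h : occS Succ a b) (ha : a ∈ τ) : b ∈ τ :=
  h.imp_of_succ (P := (· ∈ τ)) (fun a b hab => (hτ.2 a b hab).1) ha

theorem pair_sublist_of_transGen (hτ : IsTraceS Succ τ) {K : Set α} (hK : ∀ x ∈ K, x ∈ τ)
    {x y : α} (h : Relation.TransGen (restrictRel Succ K) x y) : [x, y].Sublist τ := by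
  induction h with
  | single hxy => exact (hτ.2 _ _ hxy.2.2).2 (hK _ hxy.1)
  | tail _ hyz ih => exact hτ.1.pair_sublist_trans ih ((hτ.2 _ _ hyz.2.2).2 (hK _ hyz.1))

theorem pair_sublist_of_preS (hτ : IsTraceS Succ τ) {K : Set α} (hK : ∀ x ∈ K, x ∈ τ)
    {x y : α} (h : preS Succ K x y) (hne : x ≠ y) : [x, y].Sublist τ := by
  rcases Relation.reflTransGen_iff_eq_or_transGen.mp h with rfl | h
  · exact absurd rfl hne
  · exact hτ.pair_sublist_of_transGen hK h

theorem preS_antisymm (hτ : IsTraceS Succ τ) {K : Set α} (hK : ∀ x ∈ K, x ∈ τ) {x y : α}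
    (hxy : preS Succ K x y) (hyx : preS Succ K y x) : x = y := by
  by_contra hne
  exact hτ.1.not_pair_sublist_self x <| hτ.1.pair_sublist_trans
    (hτ.pair_sublist_of_preS hK hxy hne) (hτ.pair_sublist_of_preS hK hyx (Ne.symm hne))

theorem occClass_mem_coreOcc (hτ : IsTraceS Succ τ) {a : α} (ha : a ∈ τ) :
    {x | occS Succ a x} ∈ CoreOcc Succ :=
  ⟨⟨a, rfl⟩, fun _ _ => hτ.preS_antisymm fun _ hx => hτ.mem_of_occS hx ha⟩

theorem isLinExt_occClasses (hτ : IsTraceS Succ τ) :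
    IsLinExt (fun a b => ∃ K ∈ {K | ∃ c ∈ τ, K = {x | occS Succ c x}},
        a ∈ K ∧ b ∈ K ∧ preS Succ K a b)
      (⋃₀ {K | ∃ c ∈ τ, K = {x | occS Succ c x}}) τ := by
  refine ⟨hτ.1, fun x => ⟨fun hx => ⟨_, ⟨x, hx, rfl⟩, .refl⟩, ?_⟩, ?_⟩
  · rintro ⟨_, ⟨c, hc, rfl⟩, hx⟩
    exact hτ.mem_of_occS hx hc
  · rintro a b ⟨_, ⟨c, hc, rfl⟩, -, -, hab⟩ hne
    exact hτ.pair_sublist_of_preS (fun _ hx => hτ.mem_of_occS hx hc) hab hne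

end IsTraceS

theorem IsLinExt.isTraceS (hSucc : ∀ a b, Succ a b → a ≠ b) {S : Set (Set α)}
    (hS : S ⊆ CoreOcc Succ) {τ : List α}
    (h : IsLinExt (fun a b => ∃ K ∈ S, a ∈ K ∧ b ∈ K ∧ preS Succ K a b) (⋃₀ S) τ) :
    IsTraceS Succ τ := by
  obtain ⟨hnd, hmem, hord⟩ := h
  have hclass : ∀ {a b}, Succ a b → ∀ K ∈ S, (a ∈ K ↔ b ∈ K) := by
    intro a b hab K hK
    obtain ⟨⟨c, rfl⟩, -⟩ := hS hK
    exact mem_occClass_iff_of_succ c hab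
  refine ⟨hnd, fun a b hab => ⟨?_, fun ha => ?_⟩⟩
  · simp only [hmem, Set.mem_sUnion]
    exact exists_congr fun K => and_congr_right fun hK => hclass hab K hK
  · obtain ⟨K, hK, haK⟩ := (hmem a).mp ha
    have hbK := (hclass hab K hK).mp haK
    exact hord a b ⟨K, hK, haK, hbK, .single ⟨haK, hbK, hab⟩⟩ (hSucc a b hab)

end SuccessorOnly

theorem succ_only_traces_eq_union_linExts_general {α : Type*}
    (Succ : α → α → Prop) (hS : ∀ a b, Succ a b → a ≠ b)
    (τ : List α) :
    IsTraceS Succ τ ↔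
      ∃ S ⊆ CoreOcc Succ,
        IsLinExt (fun a b => ∃ K ∈ S, a ∈ K ∧ b ∈ K ∧ preS Succ K a b)
          (⋃₀ S) τ := by
  refine ⟨fun hτ => ⟨_, ?_, hτ.isLinExt_occClasses⟩, fun ⟨S, hSc, hτ⟩ => hτ.isTraceS hS hSc⟩
  rintro K ⟨a, ha, rfl⟩
  exact hτ.occClass_mem_coreOcc ha

/-- for a successor-only declarative process, `τ` is a trace iff
there is a subset `S ⊆ CoreOcc(D)` such that `τ` is a linear extension of the
poset whose underlying set is the (disjoint) union `⋃₀ S` of the classes in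
`S` and whose order is the disjoint union of the relations `⪯_K`, `K ∈ S`. -/
theorem succ_only_traces_eq_union_linExts {α : Type*} [Fintype α]
    (Succ : α → α → Prop) (hS : ∀ a b, Succ a b → a ≠ b)
    (τ : List α) :
    IsTraceS Succ τ ↔
      ∃ S ⊆ CoreOcc Succ,
        IsLinExt (fun a b => ∃ K ∈ S, a ∈ K ∧ b ∈ K ∧ preS Succ K a b)
          (⋃₀ S) τ :=
  succ_only_traces_eq_union_linExts_general Succ hS τ
end

section
/- Let D = (Σ, Const) be a response-only declarative process (Const consists only of response constraints) and let I be a down-set of (Σ, ≲occ). Then ⪯_I equals the transpose of the restriction of ≲occ to I; that is, for all a,b ∈ I, a ⪯_I b if and only if b ≲occ a. -/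
/-!
`→ord|_I ⊆ →ord` gives one inclusion, and `(→ord)^⊕` is the transpose of `≲occ`. Conversely,
`I` is a down-set of `≲occ`, so every activity reachable along `→ord` from `a ∈ I` lies in `I`;
hence an `→ord`-path out of `a` never leaves `I` and is already an `→ord|_I`-path.
-/

section

open Relation

variable {α : Type*} {r : α → α → Prop} {I : Set α} {a b : α}

theorem Relation.ReflTransGen.of_restrictRel (h : ReflTransGen (restrictRel r I) a b) :
    ReflTransGen r a b :=
  Relation.ReflTransGen.mono (fun _ _ hxy => hxy.2.2) _ _ h

theorem Relation.ReflTransGen.restrictRel_of_forall_mem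
    (hmem : ∀ c, ReflTransGen r a c → c ∈ I) (h : ReflTransGen r a b) :
    ReflTransGen (restrictRel r I) a b := by
  induction h with
  | refl => rfl
  | @tail c d hac hcd ih => exact ih.tail ⟨hmem c hac, hmem d (hac.tail hcd), hcd⟩

theorem IsDownSet.mem_of_reflTransGen (hI : IsDownSet (ReflTransGen fun x y => r y x) I)
    (ha : a ∈ I) (h : ReflTransGen r a b) : b ∈ I :=
  hI b a (reflTransGen_swap.mpr h) ha

theorem IsDownSet.reflTransGen_restrictRel_iff
    (hI : IsDownSet (ReflTransGen fun x y => r y x) I) (ha : a ∈ I) :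
    ReflTransGen (restrictRel r I) a b ↔ ReflTransGen r a b :=
  ⟨.of_restrictRel, .restrictRel_of_forall_mem fun _ => hI.mem_of_reflTransGen ha⟩

end

theorem resp_only_preRel_transpose_general {α : Type*}
    (Resp : α → α → Prop)
    (I : Set α)
    (hI : IsDownSet (Relation.ReflTransGen (fun a b => Resp b a)) I) :
    ∀ a ∈ I, ∀ b ∈ I,
      (Relation.ReflTransGen (restrictRel Resp I) a b ↔
        Relation.ReflTransGen (fun x y => Resp y x) b a) := by
  intro a ha b _
  rw [hI.reflTransGen_restrictRel_iff ha]
  exact Relation.reflTransGen_swap.symm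

/-- in a response-only declarative process, where
`≲occ = {(a,b) : Resp(b,a) ∈ Const}^⊕` and `→ord = Resp`, for any down-set
`I` of `(Σ, ≲occ)` the relation `⪯_I = (→ord|_I)^⊕` is the transpose of
`≲occ|_I`: for all `a, b ∈ I`, `a ⪯_I b` iff `b ≲occ a`. -/
theorem resp_only_preRel_transpose {α : Type*} [Fintype α]
    (Resp : α → α → Prop) (hR : ∀ a b, Resp a b → a ≠ b)
    (I : Set α)
    (hI : IsDownSet (Relation.ReflTransGen (fun a b => Resp b a)) I) :
    ∀ a ∈ I, ∀ b ∈ I,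
      (Relation.ReflTransGen (restrictRel Resp I) a b ↔
        Relation.ReflTransGen (fun x y => Resp y x) b a) :=
  resp_only_preRel_transpose_general Resp I hI
end
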